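/- Let s be a positive integer, Y₁,…,Y_s iid uniform on {−1,+1}, and D_s = Σ_{i=1}^s Y_i. For D ≥ 0 define p_{s,D}(z) = E[T_{D_s}(z) · 1{|D_s| ≤ D}], where T_k is the Chebyshev polynomial of the first kind (with T_{−k} = T_k). Then p_{s,D} is a polynomial of degree at most D whose coefficients have absolute value at most 2^{2D}. -/
import Mathlib


open Polynomial Finset

/-- The random walk position `D_s = ∑ Y_i` for a sign pattern `Y`. -/
noncomputable def walkSum (s : ℕ) (Y : Fin s → Bool) : ℤ :=
  ∑ i, (if Y i then (1 : ℤ) else -1)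

/-- The compressed Chebyshev polynomial
`p_{s,D}(z) = E[T_{D_s}(z) · 1{|D_s| ≤ D}]`, where the expectation is the
uniform average over the `2^s` sign patterns. -/
noncomputable def chebCompress (s D : ℕ) : ℝ[X] :=
  ((2 : ℝ) ^ s)⁻¹ • ∑ Y : Fin s → Bool,
    if |walkSum s Y| ≤ (D : ℤ) then Polynomial.Chebyshev.T ℝ (walkSum s Y) else 0

lemma chebT_natDegree_coeff (n : ℕ) :
    (Polynomial.Chebyshev.T ℝ (n : ℤ)).natDegree ≤ n ∧
      ∀ m, |(Polynomial.Chebyshev.T ℝ (n : ℤ)).coeff m| ≤ 3 ^ n := by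
  induction n using Nat.strong_induction_on with
  | _ n ih =>
    match n with
    | 0 => simp [Polynomial.Chebyshev.T_zero, Polynomial.coeff_one]
           intro m; split <;> norm_num
    | 1 => constructor
           · simp [Polynomial.Chebyshev.T_one]
           · intro m
             simp [Polynomial.Chebyshev.T_one, Polynomial.coeff_X]
             split <;> norm_num
    | (n + 2) =>
      obtain ⟨hd1, hc1⟩ := ih (n + 1) (by omega)
      obtain ⟨hd0, hc0⟩ := ih n (by omega)
      have hrec : Polynomial.Chebyshev.T ℝ ((n : ℤ) + 2) =
          2 * X * Polynomial.Chebyshev.T ℝ ((n : ℤ) + 1) - Polynomial.Chebyshev.T ℝ (n : ℤ) :=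
        Polynomial.Chebyshev.T_add_two ℝ n
      have hcast : ((n + 2 : ℕ) : ℤ) = (n : ℤ) + 2 := by push_cast; ring
      have hcast1 : ((n + 1 : ℕ) : ℤ) = (n : ℤ) + 1 := by push_cast; ring
      rw [hcast, hrec, ← hcast1]
      constructor
      · apply le_trans (Polynomial.natDegree_sub_le _ _)
        apply max_le _ (by omega)
        calc (2 * X * Polynomial.Chebyshev.T ℝ ((n+1 : ℕ) : ℤ)).natDegree
            ≤ (2 * X : ℝ[X]).natDegree + (Polynomial.Chebyshev.T ℝ ((n+1 : ℕ) : ℤ)).natDegree :=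
              Polynomial.natDegree_mul_le
          _ ≤ 1 + (n + 1) := by
              gcongr
              · calc (2 * X : ℝ[X]).natDegree ≤ _ + _ := Polynomial.natDegree_mul_le
                  _ ≤ 1 := by simp
          _ = n + 2 := by omega
      · intro m
        rw [Polynomial.coeff_sub]
        have h2X : ∀ p : ℝ[X], ∀ m, (2 * X * p).coeff m = 2 * (X * p).coeff m := by
          intro p m
          have h2 : (2 : ℝ[X]) = Polynomial.C 2 := (map_ofNat Polynomial.C 2).symm
          rw [mul_assoc, h2, Polynomial.coeff_C_mul]
        have hXp : |(X * Polynomial.Chebyshev.T ℝ ((n+1 : ℕ) : ℤ)).coeff m| ≤ 3 ^ (n + 1) := by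
          cases m with
          | zero => simp [Polynomial.mul_coeff_zero]
          | succ k => rw [Polynomial.coeff_X_mul]; exact hc1 k
        calc |(2 * X * Polynomial.Chebyshev.T ℝ ((n+1:ℕ) : ℤ)).coeff m -
              (Polynomial.Chebyshev.T ℝ ((n:ℕ) : ℤ)).coeff m|
            ≤ |(2 * X * Polynomial.Chebyshev.T ℝ ((n+1:ℕ) : ℤ)).coeff m| +
              |(Polynomial.Chebyshev.T ℝ ((n:ℕ) : ℤ)).coeff m| := abs_sub _ _
          _ ≤ 2 * 3 ^ (n + 1) + 3 ^ n := by
              rw [h2X, abs_mul, abs_two]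
              exact add_le_add (mul_le_mul_of_nonneg_left hXp (by norm_num)) (hc0 m)
          _ ≤ 3 ^ (n + 2) := by ring_nf; nlinarith [pow_pos (by norm_num : (0:ℝ) < 3) n]

lemma chebT_int (k : ℤ) (D : ℕ) (hk : |k| ≤ (D : ℤ)) :
    (Polynomial.Chebyshev.T ℝ k).natDegree ≤ D ∧
      ∀ m, |(Polynomial.Chebyshev.T ℝ k).coeff m| ≤ 2 ^ (2 * D) := by
  have habs : Polynomial.Chebyshev.T ℝ k = Polynomial.Chebyshev.T ℝ (k.natAbs : ℤ) := by
    rcases Int.natAbs_eq k with h | h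
    · rw [← h]
    · nth_rewrite 1 [h]; exact Polynomial.Chebyshev.T_neg ℝ _
  have hle : k.natAbs ≤ D := by
      rw [Int.abs_eq_natAbs] at hk; exact_mod_cast hk
  obtain ⟨hd, hc⟩ := chebT_natDegree_coeff k.natAbs
  rw [habs]
  refine ⟨hd.trans hle, fun m => (hc m).trans ?_⟩
  calc (3 : ℝ) ^ k.natAbs ≤ 4 ^ k.natAbs := by gcongr; norm_num
    _ ≤ 4 ^ D := by gcongr; norm_num
    _ = 2 ^ (2 * D) := by rw [pow_mul]; norm_num

/-- `p_{s,D}` has degree at most `D` and its coefficients have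
absolute value at most `2^(2D)`. -/
theorem chebCompress_degree_coeff_bound (s D : ℕ) (hs : 0 < s) (hD : 0 ≤ D) :
    (chebCompress s D).natDegree ≤ D ∧
      ∀ n, |(chebCompress s D).coeff n| ≤ 2 ^ (2 * D) := by
  have hterm : ∀ Y : Fin s → Bool,
      ((if |walkSum s Y| ≤ (D : ℤ) then Polynomial.Chebyshev.T ℝ (walkSum s Y) else 0)).natDegree ≤ D ∧
      ∀ m, |((if |walkSum s Y| ≤ (D : ℤ) then Polynomial.Chebyshev.T ℝ (walkSum s Y) else 0)).coeff m|
        ≤ 2 ^ (2 * D) := by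
    intro Y
    split
    · exact chebT_int _ _ ‹_›
    · refine ⟨by simp, fun m => ?_⟩
      simp only [Polynomial.coeff_zero, abs_zero]
      positivity
  constructor
  · unfold chebCompress
    apply le_trans (Polynomial.natDegree_smul_le _ _)
    apply Polynomial.natDegree_sum_le_of_forall_le
    exact fun Y _ => (hterm Y).1
  · intro n
    unfold chebCompress
    rw [Polynomial.coeff_smul, Polynomial.finset_sum_coeff]
    rw [smul_eq_mul, abs_mul]
    have h2s : (0:ℝ) < 2 ^ s := by positivity
    calc |((2:ℝ) ^ s)⁻¹| * |∑ Y : Fin s → Bool, _| 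
        ≤ ((2:ℝ)^s)⁻¹ * ∑ Y : Fin s → Bool, (2:ℝ) ^ (2 * D) := by
          rw [abs_of_pos (by positivity)]
          gcongr
          exact le_trans (Finset.abs_sum_le_sum_abs _ _)
            (Finset.sum_le_sum fun Y _ => (hterm Y).2 n)
      _ = 2 ^ (2 * D) := by
          rw [Finset.sum_const, Finset.card_univ, Fintype.card_fun, nsmul_eq_mul]
          simp only [Fintype.card_fin, Fintype.card_bool]
          push_cast
          field_simp
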